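/- arXiv:2204.01213 — 7 statements merged into one kernel-verified Lean document; each statement's English description precedes it below -/
import Mathlib

section
/- Let Γ be a finite simple graph on n vertices with vertex set {1,...,n}, let e_1,...,e_n be the standard basis of ℝ^n, and let μ be the probability measure on ℝ^n given by μ = (Σ_{i=1}^n δ_{e_i} + Σ_{(i,j) ∈ edges(Γ)} 2·δ_{e_i+e_j}) / (n + 2·|edges(Γ)|), where δ_v denotes the Dirac measure at v. Then Γ admits a nontrivial graph automorphism if and only if there exists a nontrivial linear symmetry of μ, i.e., a linear map A : ℝ^n → ℝ^n with A ≠ id such that the pushforward measure A_*μ equals μ. -/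
open MeasureTheory
open scoped ENNReal

/-- The probability measure on `ℝ^n` encoding a finite simple graph `Γ` on vertices
`{1,…,n}`: atoms of relative mass `1` at each basis vector `e_i`, and of relative
mass `2` at `e_i + e_j` for each edge `(i,j)`, normalized by `n + 2·|edges(Γ)|`. -/
noncomputable def graphMeasure (n : ℕ) (Γ : SimpleGraph (Fin n)) [DecidableRel Γ.Adj] :
    Measure (Fin n → ℝ) :=
  (((n : ℝ≥0∞) + 2 * Γ.edgeFinset.card)⁻¹) •
    ((∑ i : Fin n, Measure.dirac (Pi.single i 1)) +
      ∑ s ∈ Γ.edgeFinset, (2 : ℝ≥0∞) • Measure.dirac (fun j => if j ∈ s then (1 : ℝ) else 0))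

/-!
A vertex permutation `τ` acts on `ℝ^n` by permuting coordinates; it moves the atom at `e_i` to
`e_{τ i}` and the atom at `e_a + e_b` to `e_{τ a} + e_{τ b}`, so an automorphism gives a symmetry.

Conversely, count masses in units of `(n + 2|E|)⁻¹`: `μ` has mass `1` at each `e_j` and `2` at each
edge point, while `A_*μ` has mass `#{i | A e_i = y} + 2 #{s ∈ E | A v_s = y}` at `y`. At `y = e_j`
this count is odd, so some `A e_i = e_j`, and `A e_i = e_{π i}` for a permutation `π`. By
linearity `A (e_a + e_b) = e_{π a} + e_{π b}`, which therefore has mass `≥ 2` and is an edge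
point. A permutation of a finite graph mapping edges to edges is an automorphism (its inverse is
one of its powers), and `π ≠ 1` because `A ≠ id`.
-/

open Finset

namespace MeasureTheory.Measure

variable {α β ι : Type*} [MeasurableSpace α] [MeasurableSpace β]

theorem map_finset_sum_dirac {f : α → β} (hf : Measurable f) (s : Finset ι) (x : ι → α) :
    (∑ i ∈ s, dirac (x i)).map f = ∑ i ∈ s, dirac (f (x i)) := by
  rw [← mapₗ_apply_of_measurable hf, _root_.map_sum]
  simp only [mapₗ_apply_of_measurable hf, map_dirac' hf]

theorem finset_sum_dirac_apply_singleton [MeasurableSingletonClass α] [DecidableEq α]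
    (s : Finset ι) (x : ι → α) (y : α) : (∑ i ∈ s, dirac (x i)) {y} = #{i ∈ s | x i = y} := by
  simp [finsetSum_apply, Set.indicator_apply, Finset.sum_boole]

end MeasureTheory.Measure

theorem Pi.single_one_injective {V R : Type*} [DecidableEq V] [MulZeroOneClass R]
    [Nontrivial R] : Function.Injective fun i : V => (Pi.single i 1 : V → R) := fun i j h => by
  simpa [Pi.single_apply, eq_comm] using congrFun h j

section FunLeft

variable {V R : Type*} [DecidableEq V] [Semiring R]

theorem funLeft_symm_single (τ : V ≃ V) (i : V) :
    LinearMap.funLeft R R τ.symm (Pi.single i 1) = Pi.single (τ i) 1 := by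
  ext j
  simp [Pi.single_apply, Equiv.symm_apply_eq]

theorem funLeft_symm_ne_id [Nontrivial R] {τ : Equiv.Perm V} (hτ : τ ≠ 1) :
    LinearMap.funLeft R R τ.symm ≠ LinearMap.id := by
  obtain ⟨i, hi⟩ : ∃ i, τ i ≠ i := not_forall.1 fun h => hτ (Equiv.ext h)
  intro h
  have := funLeft_symm_single (R := R) τ i
  rw [h, LinearMap.id_apply] at this
  exact hi (Pi.single_one_injective this.symm)

end FunLeft

theorem SimpleGraph.adj_perm_iff_of_forall_adj {V : Type*} [Finite V] {G : SimpleGraph V}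
    {π : Equiv.Perm V} (h : ∀ a b, G.Adj a b → G.Adj (π a) (π b)) (a b : V) :
    G.Adj (π a) (π b) ↔ G.Adj a b := by
  have hpow : ∀ k : ℕ, ∀ a b, G.Adj a b → G.Adj ((π ^ k) a) ((π ^ k) b) := by
    intro k
    induction k with
    | zero => simp
    | succ k ih => intro a b hab; simpa [pow_succ'] using h _ _ (ih a b hab)
  obtain ⟨k, hk⟩ : π⁻¹ ∈ Submonoid.powers π :=
    mem_powers_iff_mem_zpowers.mpr (inv_mem (Subgroup.mem_zpowers π))
  refine ⟨fun hab => ?_, h a b⟩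
  simpa [hk] using hpow k _ _ hab

section EdgeVec

variable {V : Type*} [DecidableEq V]

def edgeVec (s : Sym2 V) : V → ℝ := fun j => if j ∈ s then 1 else 0

theorem edgeVec_injective : Function.Injective (edgeVec (V := V)) := by
  intro s t h
  refine Sym2.ext fun j => ?_
  have := congrFun h j
  by_cases hs : j ∈ s <;> by_cases ht : j ∈ t <;> simp_all [edgeVec]

theorem edgeVec_mk {a b : V} (hab : a ≠ b) : edgeVec s(a, b) = Pi.single a 1 + Pi.single b 1 := by
  ext j
  rcases eq_or_ne j a with rfl | hja <;> rcases eq_or_ne j b with rfl | hjb <;>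
    simp_all [edgeVec]

theorem single_ne_edgeVec {s : Sym2 V} (hs : ¬ s.IsDiag) (i : V) : Pi.single i 1 ≠ edgeVec s := by
  induction s using Sym2.ind with
  | _ a b =>
    have hab : a ≠ b := by simpa using hs
    rw [edgeVec_mk hab]
    intro h
    have ha := congrFun h a
    have hb := congrFun h b
    rcases eq_or_ne i a with rfl | hia <;> simp_all

theorem edgeVec_map (τ : V ≃ V) (s : Sym2 V) :
    edgeVec (s.map τ) = LinearMap.funLeft ℝ ℝ τ.symm (edgeVec s) := by
  ext j
  have hmem : j ∈ s.map τ ↔ τ.symm j ∈ s := by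
    simp only [Sym2.mem_map, ← Equiv.eq_symm_apply, exists_eq_right]
  simp [edgeVec, hmem]

end EdgeVec

section GraphMeasure

variable {n : ℕ} {Γ : SimpleGraph (Fin n)} [DecidableRel Γ.Adj]

theorem graphMeasure_eq_smul :
    graphMeasure n Γ = ((n : ℝ≥0∞) + 2 * #Γ.edgeFinset)⁻¹ •
      (∑ i, Measure.dirac (Pi.single i 1) +
        (2 : ℝ≥0∞) • ∑ s ∈ Γ.edgeFinset, Measure.dirac (edgeVec s)) := by
  rw [graphMeasure, Finset.smul_sum]
  rfl

theorem map_graphMeasure_apply_singleton {A : (Fin n → ℝ) → Fin n → ℝ} (hA : Measurable A)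
    (y : Fin n → ℝ) :
    (graphMeasure n Γ).map A {y} = ((n : ℝ≥0∞) + 2 * #Γ.edgeFinset)⁻¹ *
      (#{i | A (Pi.single i 1) = y} + 2 * #{s ∈ Γ.edgeFinset | A (edgeVec s) = y}) := by
  rw [graphMeasure_eq_smul, Measure.map_smul, Measure.map_add _ _ hA, Measure.map_smul,
    Measure.map_finset_sum_dirac hA, Measure.map_finset_sum_dirac hA]
  simp only [Measure.smul_apply, Measure.add_apply, Measure.finset_sum_dirac_apply_singleton,
    smul_eq_mul]

theorem card_filter_eq_of_map_graphMeasure_eq [NeZero n] {A : (Fin n → ℝ) → Fin n → ℝ}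
    (hA : Measurable A) (h : (graphMeasure n Γ).map A = graphMeasure n Γ) (y : Fin n → ℝ) :
    #{i | A (Pi.single i 1) = y} + 2 * #{s ∈ Γ.edgeFinset | A (edgeVec s) = y} =
      #{i | Pi.single i 1 = y} + 2 * #{s ∈ Γ.edgeFinset | edgeVec s = y} := by
  have hc0 : (n : ℝ≥0∞) + 2 * #Γ.edgeFinset ≠ 0 := by simp [NeZero.ne n]
  have hc_top : (n : ℝ≥0∞) + 2 * #Γ.edgeFinset ≠ ∞ := by simp [ENNReal.mul_eq_top]
  have hmass := map_graphMeasure_apply_singleton (Γ := Γ) hA y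
  rw [h, ← Measure.map_id (μ := graphMeasure n Γ), map_graphMeasure_apply_singleton measurable_id,
    ENNReal.mul_right_inj (ENNReal.inv_ne_zero.2 hc_top) (ENNReal.inv_ne_top.2 hc0)] at hmass
  exact_mod_cast hmass.symm

theorem exists_perm_of_map_graphMeasure_eq [NeZero n] {A : (Fin n → ℝ) → Fin n → ℝ}
    (hA : Measurable A) (h : (graphMeasure n Γ).map A = graphMeasure n Γ) :
    ∃ π : Equiv.Perm (Fin n), ∀ i, A (Pi.single i 1) = Pi.single (π i) 1 := by
  have hpre : ∀ j, ∃ i, A (Pi.single i 1) = Pi.single j 1 := by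
    intro j
    have hcount := card_filter_eq_of_map_graphMeasure_eq hA h (Pi.single j 1)
    have hvert : #{i | (Pi.single i 1 : Fin n → ℝ) = Pi.single j 1} = 1 := by
      simp [Pi.single_one_injective.eq_iff, filter_eq']
    have hedge : #{s ∈ Γ.edgeFinset | edgeVec s = Pi.single j 1} = 0 :=
      card_eq_zero.2 <| filter_false_of_mem fun s hs =>
        (single_ne_edgeVec (Γ.not_isDiag_of_mem_edgeSet (SimpleGraph.mem_edgeFinset.1 hs)) j).symm
    obtain ⟨i, hi⟩ := card_pos.1 (show 0 < #{i | A (Pi.single i 1) = Pi.single j 1} by omega)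
    exact ⟨i, (mem_filter.1 hi).2⟩
  choose g hg using hpre
  have hg_inj : g.Injective := fun j j' hjj' =>
    Pi.single_one_injective (R := ℝ) ((hg j).symm.trans (by rw [hjj', hg]))
  refine ⟨(Equiv.ofBijective g hg_inj.bijective_of_finite).symm, fun i => ?_⟩
  conv_lhs => rw [← Equiv.ofBijective_apply_symm_apply g hg_inj.bijective_of_finite i]
  exact hg _

theorem adj_of_map_graphMeasure_eq [NeZero n] {A : (Fin n → ℝ) →ₗ[ℝ] Fin n → ℝ}
    (h : (graphMeasure n Γ).map A = graphMeasure n Γ) {π : Equiv.Perm (Fin n)}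
    (hπ : ∀ i, A (Pi.single i 1) = Pi.single (π i) 1) {a b : Fin n} (hab : Γ.Adj a b) :
    Γ.Adj (π a) (π b) := by
  have hne : π a ≠ π b := π.injective.ne hab.ne
  have hAab : A (edgeVec s(a, b)) = edgeVec s(π a, π b) := by
    rw [edgeVec_mk hab.ne, map_add, hπ, hπ, edgeVec_mk hne]
  have hcount := card_filter_eq_of_map_graphMeasure_eq
    A.continuous_of_finiteDimensional.measurable h (edgeVec s(π a, π b))
  have hsrc : 0 < #{s ∈ Γ.edgeFinset | A (edgeVec s) = edgeVec s(π a, π b)} :=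
    card_pos.2 ⟨s(a, b), mem_filter.2 ⟨Γ.mem_edgeFinset.2 hab, hAab⟩⟩
  have hvert : #{i | Pi.single i 1 = edgeVec s(π a, π b)} = 0 :=
    card_eq_zero.2 <| filter_false_of_mem fun i _ => single_ne_edgeVec (by simpa using hne) i
  obtain ⟨s, hs⟩ := card_pos.1
    (show 0 < #{s ∈ Γ.edgeFinset | edgeVec s = edgeVec s(π a, π b)} by omega)
  obtain ⟨hsE, hs_eq⟩ := mem_filter.1 hs
  rwa [edgeVec_injective hs_eq, SimpleGraph.mem_edgeFinset, SimpleGraph.mem_edgeSet] at hsE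

theorem exists_iso_ne_refl_of_map_graphMeasure_eq {A : (Fin n → ℝ) →ₗ[ℝ] Fin n → ℝ}
    (hA : A ≠ LinearMap.id) (h : (graphMeasure n Γ).map A = graphMeasure n Γ) :
    ∃ σ : Γ ≃g Γ, σ ≠ SimpleGraph.Iso.refl := by
  obtain rfl | hn := eq_or_ne n 0
  · exact absurd (Subsingleton.elim _ _) hA
  have : NeZero n := ⟨hn⟩
  obtain ⟨π, hπ⟩ :=
    exists_perm_of_map_graphMeasure_eq A.continuous_of_finiteDimensional.measurable h
  refine ⟨⟨π, SimpleGraph.adj_perm_iff_of_forall_adj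
    (fun _ _ => adj_of_map_graphMeasure_eq h hπ) _ _⟩, fun hσ => hA ?_⟩
  have hπ_one : ∀ i, π i = i := fun i => congrArg (· i) hσ
  refine (Pi.basisFun ℝ (Fin n)).ext fun i => ?_
  simp [hπ, hπ_one]

theorem map_graphMeasure_of_iso {Γ' : SimpleGraph (Fin n)} [DecidableRel Γ'.Adj] (σ : Γ ≃g Γ') :
    (graphMeasure n Γ).map (LinearMap.funLeft ℝ ℝ σ.toEquiv.symm) = graphMeasure n Γ' := by
  have hA : Measurable (LinearMap.funLeft ℝ ℝ σ.toEquiv.symm) :=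
    (LinearMap.funLeft ℝ ℝ σ.toEquiv.symm).continuous_of_finiteDimensional.measurable
  rw [graphMeasure_eq_smul, graphMeasure_eq_smul, Measure.map_smul, Measure.map_add _ _ hA,
    Measure.map_smul, Measure.map_finset_sum_dirac hA, Measure.map_finset_sum_dirac hA,
    σ.card_edgeFinset_eq]
  simp_rw [funLeft_symm_single, ← edgeVec_map]
  congr 2
  · exact Equiv.sum_comp σ.toEquiv (fun i => Measure.dirac (Pi.single i 1))
  · congr 1
    refine sum_nbij' (Sym2.map σ) (Sym2.map σ.symm) ?_ ?_ ?_ ?_ fun _ _ => rfl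
    all_goals intro s hs; simp_all [Sym2.map_map, SimpleGraph.Iso.map_mem_edgeSet_iff]

end GraphMeasure

/-- The graph `Γ` admits a nontrivial automorphism if and only if the encoding measure
`graphMeasure n Γ` admits a nontrivial linear symmetry. -/
theorem graph_automorphism_iff_linear_symmetry (n : ℕ) (Γ : SimpleGraph (Fin n))
    [DecidableRel Γ.Adj] :
    (∃ σ : Γ ≃g Γ, σ ≠ SimpleGraph.Iso.refl) ↔
      (∃ A : (Fin n → ℝ) →ₗ[ℝ] (Fin n → ℝ), A ≠ LinearMap.id ∧
        Measure.map A (graphMeasure n Γ) = graphMeasure n Γ) := by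
  refine ⟨fun ⟨σ, hσ⟩ => ⟨_, funLeft_symm_ne_id fun h => hσ ?_, map_graphMeasure_of_iso σ⟩,
    fun ⟨A, hA, h⟩ => exists_iso_ne_refl_of_map_graphMeasure_eq hA h⟩
  exact RelIso.ext fun i => congrArg (· i) h
end

section
/- Let Γ be a finite simple graph on n vertices with vertex set {1,...,n}, let e_1,...,e_n be the standard basis of ℝ^n, and let μ be the probability measure on ℝ^n given by μ = (Σ_{i=1}^n δ_{e_i} + Σ_{(i,j) ∈ edges(Γ)} 2·δ_{e_i+e_j}) / (n + 2·|edges(Γ)|), where δ_v denotes the Dirac measure at v. Then every linear map A : ℝ^n → ℝ^n with A_*μ = μ sends basis vectors to basis vectors via a graph automorphism: there exists an automorphism σ of Γ such that A(e_i) = e_{σ(i)} for all i. -/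
/-!
Up to the normalising constant, the mass that `graphMeasure n Γ` gives to a set `S` is the number
of basis vectors `e i` in `S` plus twice the number of edge vectors `e i + e j` in `S`. A symmetry
`A` therefore preserves these counts on the fibres `A ⁻¹' {p}`. At `p = e j` the count is `1`,
which is odd, so some `e i` is sent to `e j`; since there are as many `e i` as `e j`, `A` permutes
the basis vectors by some `σ`. By linearity `A (e i + e j) = e (σ i) + e (σ j)`, and comparing
the counts at an edge vector shows that `σ` preserves adjacency in both directions.
-/

open MeasureTheory
open scoped ENNReal

open Function Set

theorem exists_perm_eq_comp_of_range_subset_range {ι β : Type*} [Finite ι] {F b : ι → β}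
    (hb : Injective b) (h : range b ⊆ range F) :
    ∃ σ : Equiv.Perm ι, ∀ i, F i = b (σ i) := by
  choose g hg using fun j => h (mem_range_self j)
  have hg_bij : Bijective g := Finite.injective_iff_bijective.mp fun j k hjk => hb <| by
    rw [← hg j, ← hg k, hjk]
  refine ⟨(Equiv.ofBijective g hg_bij).symm, fun i => ?_⟩
  have := hg ((Equiv.ofBijective g hg_bij).symm i)
  rwa [Equiv.ofBijective_apply_symm_apply g hg_bij] at this

section EdgeVector

variable {α : Type*} [DecidableEq α]

def edgeVector (s : Sym2 α) : α → ℝ := fun j => if j ∈ s then 1 else 0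

theorem Pi.single_one_injective_s1 : Injective fun i : α => Pi.single i (1 : ℝ) :=
  fun i j h => by simpa [Pi.single_apply, eq_comm] using congrFun h i

theorem edgeVector_injective : Injective (edgeVector (α := α)) := fun s t h =>
  Sym2.ext fun x => by
    have := congrFun h x
    by_cases hs : x ∈ s <;> by_cases ht : x ∈ t <;> simp_all [edgeVector]

theorem Pi.single_ne_edgeVector {s : Sym2 α} (hs : ¬ s.IsDiag) (i : α) :
    Pi.single i 1 ≠ edgeVector s := by
  induction s using Sym2.ind with
  | _ a b =>
    intro h
    have ha := congrFun h a
    have hb := congrFun h b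
    simp [edgeVector, Pi.single_apply] at ha hb
    exact hs (by simp [ha, hb])

theorem Pi.single_add_single_eq_edgeVector {i j : α} (hij : i ≠ j) :
    Pi.single i (1 : ℝ) + Pi.single j 1 = edgeVector s(i, j) := by
  ext k
  by_cases hi : k = i <;> by_cases hj : k = j <;> simp_all [edgeVector]

theorem LinearMap.apply_edgeVector_of_apply_single (A : (α → ℝ) →ₗ[ℝ] (α → ℝ))
    {σ : α → α} (hσ_inj : Injective σ) (hσ : ∀ i, A (Pi.single i 1) = Pi.single (σ i) 1)
    {s : Sym2 α} (hs : ¬ s.IsDiag) : A (edgeVector s) = edgeVector (s.map σ) := by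
  induction s using Sym2.ind with
  | _ i j =>
    have hij : i ≠ j := by simpa using hs
    rw [← Pi.single_add_single_eq_edgeVector hij, map_add, hσ, hσ, Sym2.map_mk,
      Pi.single_add_single_eq_edgeVector (hσ_inj.ne hij)]

end EdgeVector

open Finset

section AtomCount

variable {n : ℕ} (Γ : SimpleGraph (Fin n)) [DecidableRel Γ.Adj]

open Classical in
noncomputable def atomCount (S : Set (Fin n → ℝ)) : ℕ :=
  #{i | Pi.single i 1 ∈ S} + 2 * #{s ∈ Γ.edgeFinset | edgeVector s ∈ S}

theorem graphMeasure_apply (S : Set (Fin n → ℝ)) :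
    graphMeasure n Γ S = ((n : ℝ≥0∞) + 2 * #Γ.edgeFinset)⁻¹ * atomCount Γ S := by
  classical
  simp only [graphMeasure, smul_add, Measure.coe_add, Measure.coe_smul, Measure.coe_finsetSum,
    Pi.add_apply, Pi.smul_apply, Finset.sum_apply, Measure.dirac_apply, indicator_apply,
    Pi.one_apply, sum_boole, smul_eq_mul, mul_ite, mul_one, mul_zero, sum_ite, sum_const,
    nsmul_eq_mul, mul_comm _ (2 : ℝ≥0∞), add_zero, atomCount, Nat.cast_add,
    Nat.cast_mul, Nat.cast_ofNat, mul_add]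
  rfl

theorem atomCount_eq_of_graphMeasure_eq {S T : Set (Fin n → ℝ)}
    (h : graphMeasure n Γ S = graphMeasure n Γ T) : atomCount Γ S = atomCount Γ T := by
  by_cases hc : (n : ℝ≥0∞) + 2 * #Γ.edgeFinset = 0
  · simp only [add_eq_zero, Nat.cast_eq_zero, mul_eq_zero, OfNat.ofNat_ne_zero, card_eq_zero,
      false_or] at hc
    obtain ⟨rfl, hE⟩ := hc
    simp [atomCount, hE]
  rw [graphMeasure_apply, graphMeasure_apply] at h
  exact_mod_cast (ENNReal.mul_right_inj (ENNReal.inv_ne_zero.mpr (by finiteness))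
    (ENNReal.inv_ne_top.mpr hc)).mp h

theorem exists_single_mem_of_odd_atomCount {S : Set (Fin n → ℝ)} (h : Odd (atomCount Γ S)) :
    ∃ i, Pi.single i 1 ∈ S := by
  classical
  by_contra! h'
  simp [atomCount, Finset.filter_false_of_mem, h', Nat.odd_iff] at h

theorem atomCount_singleton_single (j : Fin n) : atomCount Γ {Pi.single j 1} = 1 := by
  classical
  have hedges : {s ∈ Γ.edgeFinset | edgeVector s = Pi.single j 1} = ∅ :=
    Finset.filter_false_of_mem fun s hs => (Pi.single_ne_edgeVector
      (Γ.not_isDiag_of_mem_edgeSet (SimpleGraph.mem_edgeFinset.mp hs)) j).symm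
  simp [atomCount, Pi.single_one_injective_s1.eq_iff, hedges, Finset.filter_eq']

theorem atomCount_preimage_edgeVector (A : (Fin n → ℝ) →ₗ[ℝ] (Fin n → ℝ))
    (σ : Equiv.Perm (Fin n))
    (hσ : ∀ i, A (Pi.single i 1) = Pi.single (σ i) 1) {s : Sym2 (Fin n)} (hs : ¬ s.IsDiag) :
    atomCount Γ (A ⁻¹' {edgeVector s}) = if s.map σ.symm ∈ Γ.edgeSet then 2 else 0 := by
  classical
  have hbasis : #{i | A (Pi.single i 1) = edgeVector s} = 0 := by
    simp [hσ, Pi.single_ne_edgeVector hs]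
  have hedges : {t ∈ Γ.edgeFinset | A (edgeVector t) = edgeVector s}
      = {t ∈ Γ.edgeFinset | t = s.map σ.symm} := by
    refine Finset.filter_congr fun t ht => ?_
    rw [A.apply_edgeVector_of_apply_single σ.injective hσ
      (Γ.not_isDiag_of_mem_edgeSet (SimpleGraph.mem_edgeFinset.mp ht)),
      edgeVector_injective.eq_iff]
    constructor
    · rintro rfl; simp [Sym2.map_map]
    · rintro rfl; simp [Sym2.map_map]
  simp only [atomCount, Set.mem_preimage, Set.mem_singleton_iff, hbasis, hedges,
    Finset.filter_eq', SimpleGraph.mem_edgeFinset]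
  split_ifs <;> simp

theorem atomCount_singleton_edgeVector {s : Sym2 (Fin n)} (hs : ¬ s.IsDiag) :
    atomCount Γ {edgeVector s} = if s ∈ Γ.edgeSet then 2 else 0 := by
  simpa [Sym2.map_id'] using
    atomCount_preimage_edgeVector Γ LinearMap.id (Equiv.refl _) (fun _ => rfl) hs

end AtomCount

/-- Every linear symmetry of the encoding measure of a graph `Γ` sends basis vectors to
basis vectors via a graph automorphism. -/
theorem linear_symmetry_is_graph_automorphism (n : ℕ) (Γ : SimpleGraph (Fin n))
    [DecidableRel Γ.Adj] (A : (Fin n → ℝ) →ₗ[ℝ] (Fin n → ℝ))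
    (hA : Measure.map A (graphMeasure n Γ) = graphMeasure n Γ) :
    ∃ σ : Γ ≃g Γ, ∀ i : Fin n, A (Pi.single i 1) = Pi.single (σ i) 1 := by
  have hcount (p : Fin n → ℝ) : atomCount Γ (A ⁻¹' {p}) = atomCount Γ {p} := by
    refine atomCount_eq_of_graphMeasure_eq Γ ?_
    rw [← Measure.map_apply A.continuous_of_finiteDimensional.measurable
      (measurableSet_singleton p), hA]
  obtain ⟨σ, hσ⟩ :
      ∃ σ : Equiv.Perm (Fin n), ∀ i, A (Pi.single i 1) = Pi.single (σ i) 1 := by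
    refine exists_perm_eq_comp_of_range_subset_range Pi.single_one_injective_s1 ?_
    rintro _ ⟨j, rfl⟩
    have hodd : Odd (atomCount Γ (A ⁻¹' {Pi.single j 1})) := by
      rw [hcount, atomCount_singleton_single]
      exact odd_one
    exact exists_single_mem_of_odd_atomCount Γ hodd
  refine ⟨⟨σ, fun {i j} => ?_⟩, hσ⟩
  obtain rfl | hij := eq_or_ne i j
  · simp
  have h := hcount (edgeVector s(σ i, σ j))
  rw [atomCount_preimage_edgeVector Γ A σ (hσ) (by simpa using σ.injective.ne hij),
    atomCount_singleton_edgeVector Γ (by simpa using σ.injective.ne hij)] at h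
  simp only [Sym2.map_mk, Equiv.symm_apply_apply, SimpleGraph.mem_edgeSet] at h
  split_ifs at h <;> simp_all
end

section
/- Let Σ be an n×n real symmetric matrix with pairwise distinct eigenvalues, i.e., Σ = V Λ Vᵀ where V is orthogonal and Λ is diagonal with pairwise distinct diagonal entries. Let A be an n×n real matrix that is normal (A Aᵀ = Aᵀ A), has finite order (A^m = I for some integer m ≥ 1), and satisfies A Σ Aᵀ = Σ. Then A is an involution: A² = I. -/
open Matrix
open scoped ComplexOrder

/-!
A normal matrix of finite order is orthogonal: `A Aᵀ` is positive semidefinite and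
`(A Aᵀ)^m = A^m (Aᵀ)^m = 1`, so its eigenvalues are nonnegative `m`-th roots of unity, i.e. all `1`.
An orthogonal `A` with `A Σ Aᵀ = Σ` commutes with `Σ`, so `Vᵀ A V` commutes with `Λ`; as the
entries of `Λ` are distinct, `Vᵀ A V` is diagonal, hence symmetric. So `A` is symmetric and
orthogonal, and `A² = A Aᵀ = 1`.
-/

theorem Commute.of_mul_mul_eq_self {M : Type*} [Monoid M] {a b s : M} (hba : b * a = 1)
    (h : a * s * b = s) : Commute a s :=
  calc a * s = a * s * (b * a) := by rw [hba, mul_one]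
    _ = a * s * b * a := by simp only [mul_assoc]
    _ = s * a := by rw [h]

namespace Matrix

variable {n 𝕜 α : Type*} [Fintype n] [DecidableEq n]

theorem PosSemidef.eq_one_of_pow_eq_one [RCLike 𝕜] {M : Matrix n n 𝕜} (hM : M.PosSemidef)
    {m : ℕ} (hm : m ≠ 0) (h : M ^ m = 1) : M = 1 := by
  rcases subsingleton_or_nontrivial (Matrix n n 𝕜) with _ | _
  · exact Subsingleton.elim _ _
  refine CFC.eq_one_of_spectrum_subset_one (R := ℝ) M (fun x hx => ?_) hM.isHermitian
  have hx_nonneg : 0 ≤ x := by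
    rw [hM.isHermitian.spectrum_real_eq_range_eigenvalues] at hx
    obtain ⟨i, rfl⟩ := hx
    exact hM.eigenvalues_nonneg i
  have hxm : x ^ m ∈ spectrum ℝ (1 : Matrix n n 𝕜) := h ▸ spectrum.pow_mem_pow M m hx
  rw [spectrum.one_eq, Set.mem_singleton_iff, pow_eq_one_iff_of_nonneg hx_nonneg hm] at hxm
  exact hxm

theorem mul_conjTranspose_eq_one_of_pow_eq_one [RCLike 𝕜] {A : Matrix n n 𝕜}
    (hA : Commute A Aᴴ) {m : ℕ} (hm : m ≠ 0) (h : A ^ m = 1) : A * Aᴴ = 1 :=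
  (posSemidef_self_mul_conjTranspose A).eq_one_of_pow_eq_one hm <| by
    rw [hA.mul_pow, ← conjTranspose_pow, h, conjTranspose_one, one_mul]

theorem isDiag_of_commute_diagonal [CommRing α] [NoZeroDivisors α] {B : Matrix n n α}
    {Λ : n → α} (hΛ : Function.Injective Λ) (hB : Commute B (diagonal Λ)) : B.IsDiag := by
  intro i j hij
  have hentry : B i j * Λ j = Λ i * B i j := by
    simpa only [mul_diagonal, diagonal_mul] using congrFun (congrFun hB.eq i) j
  have : B i j * (Λ j - Λ i) = 0 := by linear_combination hentry
  exact (mul_eq_zero.mp this).resolve_right (sub_ne_zero.mpr (hΛ.ne hij).symm)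

theorem isSymm_of_commute_conj_diagonal [CommRing α] [NoZeroDivisors α] {A V : Matrix n n α}
    {Λ : n → α} (hV : Vᵀ * V = 1) (hΛ : Function.Injective Λ)
    (hA : Commute A (V * diagonal Λ * Vᵀ)) : A.IsSymm := by
  have hV' : V * Vᵀ = 1 := mul_eq_one_comm.mp hV
  set B := Vᵀ * A * V
  have hBΛ : Commute B (diagonal Λ) :=
    calc B * diagonal Λ = Vᵀ * (A * (V * diagonal Λ * Vᵀ)) * V := by
          simp only [B, mul_assoc, hV, mul_one]
      _ = Vᵀ * (V * diagonal Λ * Vᵀ * A) * V := by rw [hA.eq]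
      _ = diagonal Λ * B := by simp only [B, ← mul_assoc, hV, one_mul]
  have hAB : A = V * B * Vᵀ :=
    calc A = V * Vᵀ * A * (V * Vᵀ) := by rw [hV', one_mul, mul_one]
      _ = V * B * Vᵀ := by simp only [B, mul_assoc]
  have hBsymm : B.IsSymm := (isDiag_of_commute_diagonal hΛ hBΛ).isSymm
  calc Aᵀ = (V * B * Vᵀ)ᵀ := congrArg transpose hAB
    _ = V * B * Vᵀ := by
      rw [transpose_mul, transpose_mul, transpose_transpose, hBsymm.eq, ← mul_assoc]
    _ = A := hAB.symm

end Matrix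

/-- If `Σ` is a real symmetric matrix with pairwise distinct eigenvalues and `A` is a
normal matrix of finite order with `A Σ Aᵀ = Σ`, then `A` is an involution. -/
theorem normal_symmetry_of_distinct_eigenvalues_is_involution (n : ℕ)
    (S : Matrix (Fin n) (Fin n) ℝ)
    (V : Matrix (Fin n) (Fin n) ℝ) (hV : Vᵀ * V = 1)
    (Λ : Fin n → ℝ) (hΛ : Function.Injective Λ)
    (hdecomp : S = V * Matrix.diagonal Λ * Vᵀ)
    (A : Matrix (Fin n) (Fin n) ℝ)
    (hnormal : A * Aᵀ = Aᵀ * A) (m : ℕ) (hm : 1 ≤ m) (hord : A ^ m = 1)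
    (hsym : A * S * Aᵀ = S) :
    A * A = 1 := by
  have hAAt : A * Aᵀ = 1 := by
    rw [← conjTranspose_eq_transpose_of_trivial] at hnormal ⊢
    exact mul_conjTranspose_eq_one_of_pow_eq_one hnormal (by omega) hord
  have hAS : Commute A S := .of_mul_mul_eq_self (mul_eq_one_comm.mp hAAt) hsym
  have hAsymm : A.IsSymm := isSymm_of_commute_conj_diagonal hV hΛ (hdecomp ▸ hAS)
  calc A * A = A * Aᵀ := by rw [hAsymm.eq]
    _ = 1 := hAAt
end

section
/- Let Σ and Σ̂ be d×d real symmetric matrices, let v_1,...,v_d be an orthonormal eigenbasis of Σ with Σ v_i = λ_i v_i, and suppose ‖Σ̂ − Σ‖_op < ε₂. Let v̂ be a unit vector with Σ̂ v̂ = λ̂ v̂, write a_i = ⟨v̂, v_i⟩, and suppose there is an index k such that |λ̂ − λ_i| ≥ δ for all i ≠ k, where δ > 0. Then Σ_{i ≠ k} a_i² < ε₂²/δ², and consequently a_k² > 1 − ε₂²/δ². -/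
open Matrix
open scoped RealInnerProductSpace

/-!
Write `w = (Σ̂ − Σ) v̂`, so `‖w‖ < ε₂`. Since `Σ` is symmetric and `Σ̂ v̂ = λ̂ v̂`, the
coefficients of `w` in the eigenbasis of `Σ` are `⟨w, v_i⟩ = (λ̂ − λ_i) a_i`. For `i ≠ k` these
have size at least `δ |a_i|`, so Bessel's inequality gives `δ² Σ_{i ≠ k} a_i² ≤ ‖w‖² < ε₂²`;
the bound on `a_k²` then follows from Parseval, `Σ_i a_i² = ‖v̂‖² = 1`.
-/

section

variable {E : Type*} [NormedAddCommGroup E] [InnerProductSpace ℝ E]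

theorem LinearMap.IsSymmetric.inner_sub_apply_of_eigenvectors {A B : E →ₗ[ℝ] E}
    (hA : A.IsSymmetric) {u v : E} {lam mu : ℝ} (hu : A u = lam • u) (hv : B v = mu • v) :
    ⟪(B - A) v, u⟫ = (mu - lam) * ⟪v, u⟫ := by
  rw [LinearMap.sub_apply, inner_sub_left, hA, hu, hv, real_inner_smul_left,
    real_inner_smul_right]
  ring

theorem Orthonormal.sq_mul_sum_sq_inner_le_of_gap {ι : Type*} {b : ι → E} (hb : Orthonormal ℝ b)
    (s : Finset ι) {v w : E} {c : ι → ℝ} {δ : ℝ} (hδ : 0 ≤ δ) (hc : ∀ i ∈ s, δ ≤ |c i|)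
    (hw : ∀ i ∈ s, ⟪w, b i⟫ = c i * ⟪v, b i⟫) :
    δ ^ 2 * ∑ i ∈ s, ⟪v, b i⟫ ^ 2 ≤ ‖w‖ ^ 2 :=
  calc δ ^ 2 * ∑ i ∈ s, ⟪v, b i⟫ ^ 2
      ≤ ∑ i ∈ s, c i ^ 2 * ⟪v, b i⟫ ^ 2 := by
        rw [Finset.mul_sum]
        refine Finset.sum_le_sum fun i hi => mul_le_mul_of_nonneg_right ?_ (sq_nonneg _)
        rw [← sq_abs (c i)]
        exact pow_le_pow_left₀ hδ (hc i hi) 2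
    _ = ∑ i ∈ s, ‖⟪b i, w⟫‖ ^ 2 := by
        refine Finset.sum_congr rfl fun i hi => ?_
        rw [Real.norm_eq_abs, sq_abs, real_inner_comm w, hw i hi, mul_pow]
    _ ≤ ‖w‖ ^ 2 := hb.sum_inner_products_le w

theorem Orthonormal.sum_sq_inner_lt_of_eigenvalue_gap {ι : Type*} {b : ι → E}
    (hb : Orthonormal ℝ b) {A B : E →L[ℝ] E} (hA : (A : E →ₗ[ℝ] E).IsSymmetric) {lam : ι → ℝ}
    (hAb : ∀ i, A (b i) = lam i • b i) {δ ε : ℝ} (hδ : 0 < δ) (hBA : ‖B - A‖ < ε) {v : E}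
    (hv : ‖v‖ = 1) {mu : ℝ} (hBv : B v = mu • v) (s : Finset ι)
    (hgap : ∀ i ∈ s, δ ≤ |mu - lam i|) :
    ∑ i ∈ s, ⟪v, b i⟫ ^ 2 < ε ^ 2 / δ ^ 2 := by
  have hw_lt : ‖(B - A) v‖ < ε :=
    calc ‖(B - A) v‖ ≤ ‖B - A‖ * ‖v‖ := (B - A).le_opNorm v
      _ = ‖B - A‖ := by rw [hv, mul_one]
      _ < ε := hBA
  have hcoeff : ∀ i ∈ s, ⟪(B - A) v, b i⟫ = (mu - lam i) * ⟪v, b i⟫ := fun i _ =>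
    hA.inner_sub_apply_of_eigenvectors (B := B) (hAb i) hBv
  have hbessel := hb.sq_mul_sum_sq_inner_le_of_gap s hδ.le hgap hcoeff
  rw [lt_div_iff₀ (by positivity), mul_comm]
  exact hbessel.trans_lt (pow_lt_pow_left₀ hw_lt (norm_nonneg _) two_ne_zero)

end

theorem perturbed_eigenvector_coefficient_bounds_general (d : ℕ)
    (S Shat : Matrix (Fin d) (Fin d) ℝ) (hS : S.IsSymm)
    (b : OrthonormalBasis (Fin d) ℝ (EuclideanSpace ℝ (Fin d))) (lam : Fin d → ℝ)
    (hb : ∀ i, Matrix.toEuclideanCLM (𝕜 := ℝ) S (b i) = lam i • b i)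
    (δ ε₂ : ℝ) (hδ : 0 < δ)
    (hop : ‖Matrix.toEuclideanCLM (𝕜 := ℝ) (Shat - S)‖ < ε₂)
    (vhat : EuclideanSpace ℝ (Fin d)) (hvhat : ‖vhat‖ = 1) (lamhat : ℝ)
    (heig : Matrix.toEuclideanCLM (𝕜 := ℝ) Shat vhat = lamhat • vhat)
    (k : Fin d) (hk : ∀ i, i ≠ k → δ ≤ |lamhat - lam i|) :
    (∑ i ∈ Finset.univ.erase k, ⟪vhat, b i⟫ ^ 2) < ε₂ ^ 2 / δ ^ 2 ∧
      1 - ε₂ ^ 2 / δ ^ 2 < ⟪vhat, b k⟫ ^ 2 := by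
  have hSsymm : S.toEuclideanLin.IsSymmetric :=
    isSymmetric_toEuclideanLin_iff.mpr (isHermitian_iff_isSymm.mpr hS)
  rw [map_sub] at hop
  have hrest := b.orthonormal.sum_sq_inner_lt_of_eigenvalue_gap hSsymm hb hδ hop hvhat heig
    (Finset.univ.erase k) fun i hi => hk i (Finset.ne_of_mem_erase hi)
  have hparseval : ∑ i, ⟪vhat, b i⟫ ^ 2 = 1 := by
    rw [b.sum_sq_inner_left, hvhat, one_pow]
  rw [← Finset.add_sum_erase _ _ (Finset.mem_univ k)] at hparseval
  exact ⟨hrest, by linarith⟩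

/-- If `‖Σ̂ − Σ‖_op < ε₂`, `v̂` is a unit eigenvector of `Σ̂` with eigenvalue `λ̂`, and
`|λ̂ − λ_i| ≥ δ` for all `i ≠ k`, then the coefficients `a_i = ⟨v̂, v_i⟩` of `v̂` in the
orthonormal eigenbasis of `Σ` satisfy `Σ_{i ≠ k} a_i² < ε₂²/δ²`, and hence
`a_k² > 1 − ε₂²/δ²`. -/
theorem perturbed_eigenvector_coefficient_bounds (d : ℕ)
    (S Shat : Matrix (Fin d) (Fin d) ℝ) (hS : S.IsSymm) (hShat : Shat.IsSymm)
    (b : OrthonormalBasis (Fin d) ℝ (EuclideanSpace ℝ (Fin d))) (lam : Fin d → ℝ)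
    (hb : ∀ i, Matrix.toEuclideanCLM (𝕜 := ℝ) S (b i) = lam i • b i)
    (δ ε₂ : ℝ) (hδ : 0 < δ)
    (hop : ‖Matrix.toEuclideanCLM (𝕜 := ℝ) (Shat - S)‖ < ε₂)
    (vhat : EuclideanSpace ℝ (Fin d)) (hvhat : ‖vhat‖ = 1) (lamhat : ℝ)
    (heig : Matrix.toEuclideanCLM (𝕜 := ℝ) Shat vhat = lamhat • vhat)
    (k : Fin d) (hk : ∀ i, i ≠ k → δ ≤ |lamhat - lam i|) :
    (∑ i ∈ Finset.univ.erase k, ⟪vhat, b i⟫ ^ 2) < ε₂ ^ 2 / δ ^ 2 ∧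
      1 - ε₂ ^ 2 / δ ^ 2 < ⟪vhat, b k⟫ ^ 2 :=
  perturbed_eigenvector_coefficient_bounds_general d S Shat hS b lam hb δ ε₂ hδ hop vhat hvhat
    lamhat heig k hk
end

section
/- Let Σ and Σ̂ be d×d real symmetric matrices, let v_1,...,v_d be an orthonormal eigenbasis of Σ with Σ v_i = λ_i v_i, and suppose ‖Σ̂ − Σ‖_op < ε₂ with 0 < ε₂ < δ. Let v̂ be a unit vector with Σ̂ v̂ = λ̂ v̂ such that |λ̂ − λ_i| ≥ δ for all i ≠ k, and suppose the sign is aligned so that ⟨v̂, v_k⟩ ≥ 0. Then ‖v̂ − v_k‖² < 2·(1 − √(1 − ε₂²/δ²)). -/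
/-!
Write `c i = ⟪v_i, v̂⟫`. Since `Σ` is symmetric, the residual `λ̂ v̂ - Σ v̂ = (Σ̂ - Σ) v̂` has
coordinates `(λ̂ - λ_i) c i`, so by Parseval and the eigengap
`δ² (1 - c_k²) ≤ ‖(Σ̂ - Σ) v̂‖² < ε₂²`. With `c_k ≥ 0` this gives `c_k > √(1 - ε₂²/δ²)`, and
`‖v̂ - v_k‖² = 2 - 2 c_k` for unit vectors.
-/

open Matrix
open scoped RealInnerProductSpace

namespace LinearMap.IsSymmetric

variable {ι E : Type*} [Fintype ι] [NormedAddCommGroup E] [InnerProductSpace ℝ E]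
  {A : E →ₗ[ℝ] E}

theorem inner_smul_sub_apply_of_apply_eq_smul (hA : A.IsSymmetric) {v : E} {lam : ℝ}
    (hv : A v = lam • v) (μ : ℝ) (x : E) : ⟪v, μ • x - A x⟫ = (μ - lam) * ⟪v, x⟫ := by
  rw [inner_sub_right, real_inner_smul_right, ← hA, hv, real_inner_smul_left]
  ring

theorem sq_mul_sub_inner_sq_le_of_gap (hA : A.IsSymmetric) (b : OrthonormalBasis ι ℝ E)
    {lam : ι → ℝ} (hb : ∀ i, A (b i) = lam i • b i) {μ δ : ℝ} (hδ : 0 ≤ δ) {k : ι}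
    (hgap : ∀ i, i ≠ k → δ ≤ |μ - lam i|) (x : E) :
    δ ^ 2 * (‖x‖ ^ 2 - ⟪b k, x⟫ ^ 2) ≤ ‖μ • x - A x‖ ^ 2 := by
  classical
  have hsq_gap : ∀ i ∈ Finset.univ.erase k, δ ^ 2 ≤ (μ - lam i) ^ 2 := fun i hi =>
    sq_abs (μ - lam i) ▸ pow_le_pow_left₀ hδ (hgap i (Finset.ne_of_mem_erase hi)) 2
  calc δ ^ 2 * (‖x‖ ^ 2 - ⟪b k, x⟫ ^ 2)
      = ∑ i ∈ Finset.univ.erase k, δ ^ 2 * ⟪b i, x⟫ ^ 2 := by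
        rw [← Finset.mul_sum, ← b.sum_sq_inner_right,
          ← Finset.add_sum_erase _ _ (Finset.mem_univ k), add_sub_cancel_left]
    _ ≤ ∑ i ∈ Finset.univ.erase k, (μ - lam i) ^ 2 * ⟪b i, x⟫ ^ 2 :=
        Finset.sum_le_sum fun i hi => mul_le_mul_of_nonneg_right (hsq_gap i hi) (sq_nonneg _)
    _ ≤ ∑ i, (μ - lam i) ^ 2 * ⟪b i, x⟫ ^ 2 :=
        Finset.sum_le_sum_of_subset_of_nonneg (Finset.erase_subset _ _)
          fun _ _ _ => by positivity
    _ = ‖μ • x - A x‖ ^ 2 := by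
        simp_rw [← b.sum_sq_inner_right, inner_smul_sub_apply_of_apply_eq_smul hA (hb _), mul_pow]

end LinearMap.IsSymmetric

theorem Real.sqrt_one_sub_sq_div_sq_lt {c δ ε : ℝ} (hε : 0 ≤ ε) (hεδ : ε < δ) (hc : 0 ≤ c)
    (h : δ ^ 2 * (1 - c ^ 2) < ε ^ 2) : √(1 - ε ^ 2 / δ ^ 2) < c := by
  have hδ : 0 < δ ^ 2 := pow_pos (hε.trans_lt hεδ) 2
  have hratio : ε ^ 2 / δ ^ 2 ≤ 1 := (div_le_one hδ).mpr (by gcongr)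
  have hlt : 1 - ε ^ 2 / δ ^ 2 < c ^ 2 := by
    rw [sub_lt_comm, lt_div_iff₀ hδ]
    linarith
  exact (Real.sqrt_lt_sqrt (sub_nonneg.mpr hratio) hlt).trans_eq (Real.sqrt_sq hc)

theorem perturbed_eigenvector_distance_bound_general (d : ℕ)
    (S Shat : Matrix (Fin d) (Fin d) ℝ) (hS : S.IsSymm)
    (b : OrthonormalBasis (Fin d) ℝ (EuclideanSpace ℝ (Fin d))) (lam : Fin d → ℝ)
    (hb : ∀ i, Matrix.toEuclideanCLM (𝕜 := ℝ) S (b i) = lam i • b i)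
    (δ ε₂ : ℝ) (hε₂ : ε₂ < δ)
    (hop : ‖Matrix.toEuclideanCLM (𝕜 := ℝ) (Shat - S)‖ < ε₂)
    (vhat : EuclideanSpace ℝ (Fin d)) (hvhat : ‖vhat‖ = 1) (lamhat : ℝ)
    (heig : Matrix.toEuclideanCLM (𝕜 := ℝ) Shat vhat = lamhat • vhat)
    (k : Fin d) (hk : ∀ i, i ≠ k → δ ≤ |lamhat - lam i|)
    (hsign : 0 ≤ ⟪vhat, b k⟫) :
    ‖vhat - b k‖ ^ 2 < 2 * (1 - Real.sqrt (1 - ε₂ ^ 2 / δ ^ 2)) := by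
  set A := Matrix.toEuclideanCLM (𝕜 := ℝ) S
  have hA : (A : EuclideanSpace ℝ (Fin d) →ₗ[ℝ] _).IsSymmetric := by
    rw [Matrix.coe_toEuclideanCLM_eq_toEuclideanLin]
    exact isSymmetric_toEuclideanLin_iff.mpr (isHermitian_iff_isSymm.mpr hS)
  have hresidual : lamhat • vhat - A vhat = Matrix.toEuclideanCLM (𝕜 := ℝ) (Shat - S) vhat := by
    rw [map_sub, _root_.sub_apply, heig]
  have hresidual_lt : ‖lamhat • vhat - A vhat‖ < ε₂ := by
    rw [hresidual]
    exact ((ContinuousLinearMap.le_opNorm _ _).trans_eq (by rw [hvhat, mul_one])).trans_lt hop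
  have hε₂pos : 0 < ε₂ := (norm_nonneg _).trans_lt hresidual_lt
  have hgap := hA.sq_mul_sub_inner_sq_le_of_gap b hb (hε₂pos.trans hε₂).le hk vhat
  rw [hvhat, one_pow, real_inner_comm] at hgap
  have hcos := Real.sqrt_one_sub_sq_div_sq_lt hε₂pos.le hε₂ hsign <|
    hgap.trans_lt (pow_lt_pow_left₀ hresidual_lt (norm_nonneg _) two_ne_zero)
  rw [norm_sub_sq_real, hvhat, b.orthonormal.1 k]
  linarith

/-- Under the eigenvalue-separation and operator-norm perturbation hypotheses, if the sign
of the unit eigenvector `v̂` of `Σ̂` is aligned with the corresponding eigenvector `v_k` of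
`Σ` (i.e. `⟨v̂, v_k⟩ ≥ 0`), then `‖v̂ − v_k‖² < 2(1 − √(1 − ε₂²/δ²))`. -/
theorem perturbed_eigenvector_distance_bound (d : ℕ)
    (S Shat : Matrix (Fin d) (Fin d) ℝ) (hS : S.IsSymm) (hShat : Shat.IsSymm)
    (b : OrthonormalBasis (Fin d) ℝ (EuclideanSpace ℝ (Fin d))) (lam : Fin d → ℝ)
    (hb : ∀ i, Matrix.toEuclideanCLM (𝕜 := ℝ) S (b i) = lam i • b i)
    (δ ε₂ : ℝ) (hε₂pos : 0 < ε₂) (hε₂ : ε₂ < δ)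
    (hop : ‖Matrix.toEuclideanCLM (𝕜 := ℝ) (Shat - S)‖ < ε₂)
    (vhat : EuclideanSpace ℝ (Fin d)) (hvhat : ‖vhat‖ = 1) (lamhat : ℝ)
    (heig : Matrix.toEuclideanCLM (𝕜 := ℝ) Shat vhat = lamhat • vhat)
    (k : Fin d) (hk : ∀ i, i ≠ k → δ ≤ |lamhat - lam i|)
    (hsign : 0 ≤ ⟪vhat, b k⟫) :
    ‖vhat - b k‖ ^ 2 < 2 * (1 - Real.sqrt (1 - ε₂ ^ 2 / δ ^ 2)) :=
  perturbed_eigenvector_distance_bound_general d S Shat hS b lam hb δ ε₂ hε₂ hop vhat hvhat lamhat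
    heig k hk hsign
end

section
/- Let Σ and Σ̂ be d×d real symmetric matrices, let v_1,...,v_d be an orthonormal eigenbasis of Σ with Σ v_i = λ_i v_i, and suppose ‖Σ̂ − Σ‖_op < ε₂ with 0 < ε₂ < δ. Let v̂ be a unit vector with Σ̂ v̂ = λ̂ v̂ such that |λ̂ − λ_i| ≥ δ for all i ≠ k. Then (λ̂ − λ_k)² < ε₂² / (1 − ε₂²/δ²). -/
open Matrix
open scoped RealInnerProductSpace

/-!
Expand `v̂` in the eigenbasis of `Σ`, with coefficients `cᵢ = ⟪vᵢ, v̂⟫`. The residual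
`λ̂ v̂ - Σ v̂ = (Σ̂ - Σ) v̂` has norm `< ε₂` and coefficients `(λ̂ - λᵢ) cᵢ`, so by Parseval
`∑ (λ̂ - λᵢ)² cᵢ² < ε₂²`. Since `(λ̂ - λᵢ)² ≥ δ²` for `i ≠ k`, the mass `1 - c_k²` off `k` is
`< ε₂²/δ²`; hence `c_k² > 1 - ε₂²/δ²`, and `(λ̂ - λ_k)² c_k² < ε₂²` gives the bound.
-/

theorem lt_div_one_sub_div_of_sum_mul_lt {ι : Type*} [Fintype ι] (a w : ι → ℝ) (k : ι)
    {D E : ℝ} (hD : 0 < D) (hED : E < D) (hw : ∀ i, 0 ≤ w i) (hw_sum : ∑ i, w i = 1)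
    (hak : 0 ≤ a k) (hsep : ∀ i, i ≠ k → D ≤ a i) (hsum : ∑ i, a i * w i < E) :
    a k < E / (1 - E / D) := by
  classical
  have hmass : ∑ i ∈ Finset.univ.erase k, w i = 1 - w k := by
    rw [← hw_sum, ← Finset.add_sum_erase _ _ (Finset.mem_univ k)]
    ring
  have hoff : D * (1 - w k) ≤ ∑ i ∈ Finset.univ.erase k, a i * w i := by
    rw [← hmass, Finset.mul_sum]
    exact Finset.sum_le_sum fun i hi =>
      mul_le_mul_of_nonneg_right (hsep i (Finset.ne_of_mem_erase hi)) (hw i)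
  have hsplit : a k * w k + D * (1 - w k) < E := by
    rw [← Finset.add_sum_erase _ _ (Finset.mem_univ k)] at hsum
    linarith
  have hwk_le : w k ≤ 1 := by
    linarith [Finset.sum_nonneg fun i (_ : i ∈ Finset.univ.erase k) => hw i]
  have hwk : 1 - E / D < w k := by
    rw [sub_lt_comm, lt_div_iff₀ hD]
    nlinarith [mul_nonneg hak (hw k)]
  rw [lt_div_iff₀ (sub_pos.2 ((div_lt_one hD).2 hED))]
  calc a k * (1 - E / D) ≤ a k * w k := mul_le_mul_of_nonneg_left hwk.le hak
    _ < E := by linarith [mul_nonneg hD.le (sub_nonneg.2 hwk_le)]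

section EigenCoordinates

variable {ι E : Type*} [Fintype ι] [NormedAddCommGroup E] [InnerProductSpace ℝ E]
  {T : E →ₗ[ℝ] E}

theorem LinearMap.IsSymmetric.inner_apply_of_apply_eq_smul (hT : T.IsSymmetric) {u : E} {c : ℝ}
    (hu : T u = c • u) (x : E) : ⟪u, T x⟫ = c * ⟪u, x⟫ := by
  rw [← hT, hu, real_inner_smul_left]

theorem LinearMap.IsSymmetric.sum_sq_mul_sq_inner_eq_norm_sq (hT : T.IsSymmetric)
    (b : OrthonormalBasis ι ℝ E) {lam : ι → ℝ} (hb : ∀ i, T (b i) = lam i • b i) (μ : ℝ)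
    (v : E) : ∑ i, (μ - lam i) ^ 2 * ⟪b i, v⟫ ^ 2 = ‖μ • v - T v‖ ^ 2 := by
  rw [← b.sum_sq_inner_right]
  refine Finset.sum_congr rfl fun i _ => ?_
  rw [inner_sub_right, real_inner_smul_right, hT.inner_apply_of_apply_eq_smul (hb i)]
  ring

end EigenCoordinates

theorem perturbed_eigenvalue_distance_bound_general (d : ℕ)
    (S Shat : Matrix (Fin d) (Fin d) ℝ) (hS : S.IsSymm)
    (b : OrthonormalBasis (Fin d) ℝ (EuclideanSpace ℝ (Fin d))) (lam : Fin d → ℝ)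
    (hb : ∀ i, Matrix.toEuclideanCLM (𝕜 := ℝ) S (b i) = lam i • b i)
    (δ ε₂ : ℝ) (hε₂pos : 0 < ε₂) (hε₂ : ε₂ < δ)
    (hop : ‖Matrix.toEuclideanCLM (𝕜 := ℝ) (Shat - S)‖ < ε₂)
    (vhat : EuclideanSpace ℝ (Fin d)) (hvhat : ‖vhat‖ = 1) (lamhat : ℝ)
    (heig : Matrix.toEuclideanCLM (𝕜 := ℝ) Shat vhat = lamhat • vhat)
    (k : Fin d) (hk : ∀ i, i ≠ k → δ ≤ |lamhat - lam i|) :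
    (lamhat - lam k) ^ 2 < ε₂ ^ 2 / (1 - ε₂ ^ 2 / δ ^ 2) := by
  have hδ : 0 < δ := hε₂pos.trans hε₂
  have hT : (Matrix.toEuclideanLin S).IsSymmetric :=
    isSymmetric_toEuclideanLin_iff.2 (isHermitian_iff_isSymm.2 hS)
  have hres : ‖lamhat • vhat - Matrix.toEuclideanCLM (𝕜 := ℝ) S vhat‖ < ε₂ := by
    rw [← heig, ← _root_.sub_apply, ← map_sub]
    calc _ ≤ ‖Matrix.toEuclideanCLM (𝕜 := ℝ) (Shat - S)‖ * ‖vhat‖ :=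
          ContinuousLinearMap.le_opNorm _ _
      _ < ε₂ := by rwa [hvhat, mul_one]
  refine lt_div_one_sub_div_of_sum_mul_lt (fun i => (lamhat - lam i) ^ 2)
    (fun i => ⟪b i, vhat⟫ ^ 2) k (by positivity) (pow_lt_pow_left₀ hε₂ hε₂pos.le two_ne_zero)
    (fun i => sq_nonneg _) (by rw [b.sum_sq_inner_right, hvhat, one_pow]) (sq_nonneg _)
    (fun i hi => sq_abs (lamhat - lam i) ▸ pow_le_pow_left₀ hδ.le (hk i hi) 2) ?_
  rw [hT.sum_sq_mul_sq_inner_eq_norm_sq b hb]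
  exact pow_lt_pow_left₀ hres (norm_nonneg _) two_ne_zero

/-- Under the eigenvalue-separation and operator-norm perturbation hypotheses, the eigenvalue
`λ̂` of `Σ̂` corresponding to the eigenvalue `λ_k` of `Σ` satisfies
`(λ̂ − λ_k)² < ε₂²/(1 − ε₂²/δ²)`. -/
theorem perturbed_eigenvalue_distance_bound (d : ℕ)
    (S Shat : Matrix (Fin d) (Fin d) ℝ) (hS : S.IsSymm) (hShat : Shat.IsSymm)
    (b : OrthonormalBasis (Fin d) ℝ (EuclideanSpace ℝ (Fin d))) (lam : Fin d → ℝ)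
    (hb : ∀ i, Matrix.toEuclideanCLM (𝕜 := ℝ) S (b i) = lam i • b i)
    (δ ε₂ : ℝ) (hε₂pos : 0 < ε₂) (hε₂ : ε₂ < δ)
    (hop : ‖Matrix.toEuclideanCLM (𝕜 := ℝ) (Shat - S)‖ < ε₂)
    (vhat : EuclideanSpace ℝ (Fin d)) (hvhat : ‖vhat‖ = 1) (lamhat : ℝ)
    (heig : Matrix.toEuclideanCLM (𝕜 := ℝ) Shat vhat = lamhat • vhat)
    (k : Fin d) (hk : ∀ i, i ≠ k → δ ≤ |lamhat - lam i|) :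
    (lamhat - lam k) ^ 2 < ε₂ ^ 2 / (1 - ε₂ ^ 2 / δ ^ 2) :=
  perturbed_eigenvalue_distance_bound_general d S Shat hS b lam hb δ ε₂ hε₂pos hε₂ hop vhat hvhat
    lamhat heig k hk
end

section
/- Let Σ and Σ̂ be d×d real symmetric matrices with ‖Σ̂ − Σ‖_op < ε₂, let v_1,...,v_d be an orthonormal eigenbasis of Σ with eigenvalues λ_1,...,λ_d satisfying |λ_i − λ_j| ≥ 2δ for i ≠ j, and suppose 0 < ε₂ < δ. Let v̂_1,...,v̂_d be an orthonormal eigenbasis of Σ̂ with eigenvalues λ̂_1,...,λ̂_d, indexed so that |λ̂_i − λ_i| < δ and ⟨v̂_i, v_i⟩ ≥ 0 for each i. Let μ, μ̂ ∈ ℝ^d satisfy |⟨μ̂, v_i⟩ − ⟨μ, v_i⟩| < ε_{1i} for each i. Then for each k, |⟨μ̂, v̂_k⟩ − ⟨μ, v_k⟩| < ε_{1k} + √2·(d+1)·‖μ̂‖·√(1 − √(1 − ε₂²/δ²)). -/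
open Matrix
open scoped RealInnerProductSpace

/-!
Write `v̂_k = ∑ cᵢ vᵢ` with `cᵢ = ⟪vᵢ, v̂_k⟫`. The residual `λ̂_k v̂_k − Σ v̂_k = (Σ̂ − Σ) v̂_k`
has norm below `ε₂`, and its squared norm is `∑ (λ̂_k − λᵢ)² cᵢ²`. Every `i ≠ k` has
`|λ̂_k − λᵢ| ≥ δ` by the eigenvalue gap, so `δ² (1 − c_k²) < ε₂²`; with `c_k ≥ 0` this gives
`c_k ≥ √(1 − ε₂²/δ²)`, hence `‖v̂_k − v_k‖² = 2 (1 − c_k) ≤ 2 (1 − √(1 − ε₂²/δ²))`. Finally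
`⟨μ̂, v̂_k⟩ − ⟨μ, v_k⟩ = (⟨μ̂, v_k⟩ − ⟨μ, v_k⟩) + ⟨μ̂, v̂_k − v_k⟩` and Cauchy–Schwarz.
-/

namespace OrthonormalBasis

variable {ι E : Type*} [Fintype ι] [NormedAddCommGroup E] [InnerProductSpace ℝ E]
  (b : OrthonormalBasis ι ℝ E) {A : E →ₗ[ℝ] E} {lam : ι → ℝ}

theorem inner_apply_of_apply_eq_smul (hA : ∀ i, A (b i) = lam i • b i) (i : ι) (v : E) :
    ⟪b i, A v⟫ = lam i * ⟪b i, v⟫ := by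
  conv_lhs => rw [← b.sum_repr' v]
  simp only [map_sum, map_smul, hA, smul_smul]
  rw [b.orthonormal.inner_right_fintype, mul_comm]

theorem norm_smul_sub_apply_sq (hA : ∀ i, A (b i) = lam i • b i) (μ : ℝ) (v : E) :
    ‖μ • v - A v‖ ^ 2 = ∑ i, ((μ - lam i) * ⟪b i, v⟫) ^ 2 := by
  rw [← b.sum_sq_inner_right]
  congr! 2 with i
  rw [inner_sub_right, real_inner_smul_right, b.inner_apply_of_apply_eq_smul hA]
  ring

/-- Davis–Kahan `sin θ` bound for one eigenvector. -/
theorem sq_mul_one_sub_inner_sq_le (hA : ∀ i, A (b i) = lam i • b i) {μ δ : ℝ} {v : E}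
    (hv : ‖v‖ = 1) {k : ι} (hδ : 0 ≤ δ) (hgap : ∀ i ≠ k, δ ≤ |μ - lam i|) :
    δ ^ 2 * (1 - ⟪b k, v⟫ ^ 2) ≤ ‖μ • v - A v‖ ^ 2 := by
  classical
  have hparseval : ⟪b k, v⟫ ^ 2 + ∑ i ∈ Finset.univ.erase k, ⟪b i, v⟫ ^ 2 = 1 := by
    rw [Finset.add_sum_erase _ (fun i => ⟪b i, v⟫ ^ 2) (Finset.mem_univ k),
      b.sum_sq_inner_right, hv, one_pow]
  calc δ ^ 2 * (1 - ⟪b k, v⟫ ^ 2)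
      = ∑ i ∈ Finset.univ.erase k, δ ^ 2 * ⟪b i, v⟫ ^ 2 := by
        rw [← Finset.mul_sum]; congr 1; linarith
    _ ≤ ∑ i ∈ Finset.univ.erase k, ((μ - lam i) * ⟪b i, v⟫) ^ 2 := by
        refine Finset.sum_le_sum fun i hi => ?_
        have hsq := pow_le_pow_left₀ hδ (hgap i (Finset.ne_of_mem_erase hi)) 2
        rw [sq_abs] at hsq
        rw [mul_pow]
        exact mul_le_mul_of_nonneg_right hsq (sq_nonneg _)
    _ ≤ ∑ i, ((μ - lam i) * ⟪b i, v⟫) ^ 2 :=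
        Finset.sum_le_sum_of_subset_of_nonneg (Finset.erase_subset _ _) fun _ _ _ => sq_nonneg _
    _ = ‖μ • v - A v‖ ^ 2 := (b.norm_smul_sub_apply_sq hA μ v).symm

end OrthonormalBasis

theorem sqrt_one_sub_div_sq_le {c δ ε : ℝ} (hc : 0 ≤ c) (hδ : 0 < δ)
    (h : δ ^ 2 * (1 - c ^ 2) < ε ^ 2) : √(1 - ε ^ 2 / δ ^ 2) ≤ c := by
  rw [← Real.sqrt_sq hc]
  refine Real.sqrt_le_sqrt ?_
  rw [sub_le_comm, le_div_iff₀ (by positivity)]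
  linarith

section InnerProductSpace

variable {E : Type*} [NormedAddCommGroup E] [InnerProductSpace ℝ E]

theorem norm_sub_sq_of_norm_eq_one {u w : E} (hu : ‖u‖ = 1) (hw : ‖w‖ = 1) :
    ‖u - w‖ ^ 2 = 2 * (1 - ⟪u, w⟫) := by
  rw [norm_sub_sq_real, hu, hw]; ring

theorem norm_sub_le_of_sq_mul_one_sub_inner_sq_lt {u w : E} (hu : ‖u‖ = 1) (hw : ‖w‖ = 1)
    (hinner : 0 ≤ ⟪u, w⟫) {δ ε : ℝ} (hδ : 0 < δ) (h : δ ^ 2 * (1 - ⟪u, w⟫ ^ 2) < ε ^ 2) :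
    ‖u - w‖ ≤ √2 * √(1 - √(1 - ε ^ 2 / δ ^ 2)) := by
  rw [← Real.sqrt_mul zero_le_two, ← Real.sqrt_sq (norm_nonneg _),
    norm_sub_sq_of_norm_eq_one hu hw]
  gcongr
  exact sqrt_one_sub_div_sq_le hinner hδ h

theorem abs_inner_sub_inner_le (μ μhat u w : E) :
    |⟪μhat, u⟫ - ⟪μ, w⟫| ≤ |⟪μhat, w⟫ - ⟪μ, w⟫| + ‖μhat‖ * ‖u - w‖ := by
  calc |⟪μhat, u⟫ - ⟪μ, w⟫| = |⟪μhat, u - w⟫ + (⟪μhat, w⟫ - ⟪μ, w⟫)| := by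
        rw [inner_sub_right]; ring_nf
    _ ≤ |⟪μhat, u - w⟫| + |⟪μhat, w⟫ - ⟪μ, w⟫| := abs_add_le _ _
    _ ≤ ‖μhat‖ * ‖u - w‖ + |⟪μhat, w⟫ - ⟪μ, w⟫| := by gcongr; exact abs_real_inner_le_norm _ _
    _ = _ := add_comm _ _

end InnerProductSpace

theorem mean_coefficient_error_bound_general (d : ℕ)
    (S Shat : Matrix (Fin d) (Fin d) ℝ)
    (b : OrthonormalBasis (Fin d) ℝ (EuclideanSpace ℝ (Fin d))) (lam : Fin d → ℝ)
    (hb : ∀ i, Matrix.toEuclideanCLM (𝕜 := ℝ) S (b i) = lam i • b i)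
    (δ ε₂ : ℝ)
    (hgap : ∀ i j, i ≠ j → 2 * δ ≤ |lam i - lam j|)
    (hop : ‖Matrix.toEuclideanCLM (𝕜 := ℝ) (Shat - S)‖ < ε₂)
    (bhat : OrthonormalBasis (Fin d) ℝ (EuclideanSpace ℝ (Fin d))) (lamhat : Fin d → ℝ)
    (hbhat : ∀ i, Matrix.toEuclideanCLM (𝕜 := ℝ) Shat (bhat i) = lamhat i • bhat i)
    (hmatch : ∀ i, |lamhat i - lam i| < δ)
    (hsign : ∀ i, 0 ≤ ⟪bhat i, b i⟫)
    (μ μhat : EuclideanSpace ℝ (Fin d)) (ε₁ : Fin d → ℝ)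
    (hμ : ∀ i, |⟪μhat, b i⟫ - ⟪μ, b i⟫| < ε₁ i) (k : Fin d) :
    |⟪μhat, bhat k⟫ - ⟪μ, b k⟫| <
      ε₁ k + Real.sqrt 2 * (d + 1) * ‖μhat‖ *
        Real.sqrt (1 - Real.sqrt (1 - ε₂ ^ 2 / δ ^ 2)) := by
  have hδ : 0 < δ := (abs_nonneg _).trans_lt (hmatch k)
  have hsep : ∀ i ≠ k, δ ≤ |lamhat k - lam i| := fun i hik => by
    linarith [hgap k i hik.symm, abs_sub_le (lam k) (lamhat k) (lam i),
      abs_sub_comm (lam k) (lamhat k), hmatch k]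
  have hresidual : ‖lamhat k • bhat k - toEuclideanCLM (𝕜 := ℝ) S (bhat k)‖ < ε₂ :=
    calc _ = ‖toEuclideanCLM (𝕜 := ℝ) (Shat - S) (bhat k)‖ := by
          rw [map_sub, _root_.sub_apply, hbhat k]
      _ ≤ ‖toEuclideanCLM (𝕜 := ℝ) (Shat - S)‖ := by
          simpa [bhat.orthonormal.1 k] using
            (toEuclideanCLM (𝕜 := ℝ) (Shat - S)).le_opNorm (bhat k)
      _ < ε₂ := hop
  have hsin : δ ^ 2 * (1 - ⟪bhat k, b k⟫ ^ 2) < ε₂ ^ 2 := by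
    rw [real_inner_comm]
    calc _ ≤ ‖lamhat k • bhat k - toEuclideanCLM (𝕜 := ℝ) S (bhat k)‖ ^ 2 :=
          b.sq_mul_one_sub_inner_sq_le (A := (toEuclideanCLM (𝕜 := ℝ) S).toLinearMap) hb
            (bhat.orthonormal.1 k) hδ.le hsep
      _ < ε₂ ^ 2 := pow_lt_pow_left₀ hresidual (norm_nonneg _) two_ne_zero
  have hdist := norm_sub_le_of_sq_mul_one_sub_inner_sq_lt (bhat.orthonormal.1 k)
    (b.orthonormal.1 k) (hsign k) hδ hsin
  calc _ ≤ |⟪μhat, b k⟫ - ⟪μ, b k⟫| + ‖μhat‖ * ‖bhat k - b k‖ :=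
        abs_inner_sub_inner_le μ μhat (bhat k) (b k)
    _ ≤ |⟪μhat, b k⟫ - ⟪μ, b k⟫| + ‖μhat‖ * (√2 * √(1 - √(1 - ε₂ ^ 2 / δ ^ 2))) := by
        gcongr
    _ < ε₁ k + (d + 1) * (‖μhat‖ * (√2 * √(1 - √(1 - ε₂ ^ 2 / δ ^ 2)))) := by
        refine add_lt_add_of_lt_of_le (hμ k) (le_mul_of_one_le_left (by positivity) ?_)
        exact le_add_of_nonneg_left d.cast_nonneg
    _ = _ := by ring

/-- Error bound for the estimated mean coefficients in the estimated eigenbasis: if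
`‖Σ̂ − Σ‖_op < ε₂ < δ`, the eigenvalues of `Σ` are `2δ`-separated, the eigenbases are matched
up (`|λ̂_i − λ_i| < δ` and `⟨v̂_i, v_i⟩ ≥ 0`), and `|⟨μ̂, v_i⟩ − ⟨μ, v_i⟩| < ε₁ᵢ`, then
`|⟨μ̂, v̂_k⟩ − ⟨μ, v_k⟩| < ε₁ₖ + √2·(d+1)·‖μ̂‖·√(1 − √(1 − ε₂²/δ²))` for every `k`. -/
theorem mean_coefficient_error_bound (d : ℕ)
    (S Shat : Matrix (Fin d) (Fin d) ℝ) (hS : S.IsSymm) (hShat : Shat.IsSymm)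
    (b : OrthonormalBasis (Fin d) ℝ (EuclideanSpace ℝ (Fin d))) (lam : Fin d → ℝ)
    (hb : ∀ i, Matrix.toEuclideanCLM (𝕜 := ℝ) S (b i) = lam i • b i)
    (δ ε₂ : ℝ) (hε₂pos : 0 < ε₂) (hε₂ : ε₂ < δ)
    (hgap : ∀ i j, i ≠ j → 2 * δ ≤ |lam i - lam j|)
    (hop : ‖Matrix.toEuclideanCLM (𝕜 := ℝ) (Shat - S)‖ < ε₂)
    (bhat : OrthonormalBasis (Fin d) ℝ (EuclideanSpace ℝ (Fin d))) (lamhat : Fin d → ℝ)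
    (hbhat : ∀ i, Matrix.toEuclideanCLM (𝕜 := ℝ) Shat (bhat i) = lamhat i • bhat i)
    (hmatch : ∀ i, |lamhat i - lam i| < δ)
    (hsign : ∀ i, 0 ≤ ⟪bhat i, b i⟫)
    (μ μhat : EuclideanSpace ℝ (Fin d)) (ε₁ : Fin d → ℝ)
    (hμ : ∀ i, |⟪μhat, b i⟫ - ⟪μ, b i⟫| < ε₁ i) (k : Fin d) :
    |⟪μhat, bhat k⟫ - ⟪μ, b k⟫| <
      ε₁ k + Real.sqrt 2 * (d + 1) * ‖μhat‖ *
        Real.sqrt (1 - Real.sqrt (1 - ε₂ ^ 2 / δ ^ 2)) :=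
  mean_coefficient_error_bound_general d S Shat b lam hb δ ε₂ hgap hop bhat lamhat hbhat hmatch
    hsign μ μhat ε₁ hμ k
end
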